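/- arXiv:1308.6810 — 2 statements merged into one kernel-verified Lean document; each statement's English description precedes it below -/
import Mathlib

section
/- Lemma (SC part of Lemma 1). For every well-formed execution (E, po, rf, co), under the SC instantiation — ppo = po, fences = ∅, hb = ppo ∪ fences ∪ rfe, prop = ppo ∪ fences ∪ rf ∪ fr — the four axioms SC-PER-LOCATION (acyclic(po-loc ∪ com)), NO-THIN-AIR (acyclic(hb)), OBSERVATION (irreflexive(fre ; prop ; hb*)) and PROPAGATION (acyclic(co ∪ prop)) all hold if and only if acyclic(po ∪ com), i.e. the execution is sequentially consistent in Lamport's sense (as characterized by acyclicity of program order together with communications). -/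
/-!
Under the SC instantiation `co ∪ prop` is exactly `po ∪ com`, so PROPAGATION alone is Lamport's
condition. The relations occurring in the other three axioms are all contained in `po ∪ com`
(and `fre ; prop ; hb*` in its transitive closure), so they follow from its acyclicity.
-/

universe u v

/-- Relational composition `r1 ; r2`. -/
def rcomp {E : Type u} (r1 r2 : E → E → Prop) : E → E → Prop :=
  fun x z => ∃ y, r1 x y ∧ r2 y z

/-- `irreflexive r` : no event is related to itself. -/
def irreflexiveRel {E : Type u} (r : E → E → Prop) : Prop := ¬ ∃ x, r x x

/-- `acyclic r` : the transitive closure of `r` is irreflexive. -/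
def acyclicRel {E : Type u} (r : E → E → Prop) : Prop :=
  irreflexiveRel (Relation.TransGen r)

/-- A well-formed execution `(E, po, rf, co)` together with its event data. -/
structure WellFormedExec (E : Type u) (Loc : Type v) where
  /-- thread of an event -/
  proc : E → ℕ
  /-- memory location of an event -/
  addr : E → Loc
  /-- set of write events -/
  W : Set E
  /-- set of read events -/
  R : Set E
  po : E → E → Prop
  rf : E → E → Prop
  co : E → E → Prop
  WR_disjoint : Disjoint W R
  po_trans : ∀ x y z, po x y → po y z → po x z
  po_irrefl : ∀ x, ¬ po x x
  po_wf : ∀ x y, po x y → x ≠ y ∧ proc x = proc y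
  po_total : ∀ x y, x ≠ y → proc x = proc y → po x y ∨ po y x
  rf_wf : ∀ w r, rf w r → w ∈ W ∧ r ∈ R ∧ addr w = addr r
  rf_exists_unique : ∀ r ∈ R, ∃! w, rf w r
  co_wf : ∀ w1 w2, co w1 w2 → w1 ∈ W ∧ w2 ∈ W ∧ w1 ≠ w2 ∧ addr w1 = addr w2
  co_trans : ∀ x y z, co x y → co y z → co x z
  co_irrefl : ∀ x, ¬ co x x
  co_total : ∀ w1 w2, w1 ∈ W → w2 ∈ W → w1 ≠ w2 → addr w1 = addr w2 → co w1 w2 ∨ co w2 w1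

namespace WellFormedExec

variable {E : Type u} {Loc : Type v} (X : WellFormedExec E Loc)

/-- program order restricted to the same location -/
def poloc : E → E → Prop := fun x y => X.po x y ∧ X.addr x = X.addr y

/-- from-read -/
def fr : E → E → Prop := fun r w1 => ∃ w0, X.rf w0 r ∧ X.co w0 w1

/-- communications -/
def com : E → E → Prop := fun x y => X.co x y ∨ X.rf x y ∨ X.fr x y

/-- external read-from -/
def rfe : E → E → Prop := fun w r => X.rf w r ∧ X.proc w ≠ X.proc r

/-- external from-read -/
def fre : E → E → Prop := fun r w => X.fr r w ∧ X.proc r ≠ X.proc w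

end WellFormedExec

section SC

variable {E : Type u} {Loc : Type v}

/-- SC instantiation: preserved program order is all of `po`. -/
def scPpo (X : WellFormedExec E Loc) : E → E → Prop := X.po

/-- SC instantiation: no fences. -/
def scFences (_X : WellFormedExec E Loc) : E → E → Prop := fun _ _ => False

/-- SC happens-before: `ppo ∪ fences ∪ rfe`. -/
def scHb (X : WellFormedExec E Loc) : E → E → Prop :=
  fun x y => scPpo X x y ∨ scFences X x y ∨ X.rfe x y

/-- SC propagation order: `ppo ∪ fences ∪ rf ∪ fr`. -/
def scProp (X : WellFormedExec E Loc) : E → E → Prop :=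
  fun x y => scPpo X x y ∨ scFences X x y ∨ X.rf x y ∨ X.fr x y

open Relation

section Relations

variable {r s t : E → E → Prop}

theorem acyclicRel.mono (hs : acyclicRel s) (h : r ≤ s) : acyclicRel r :=
  fun ⟨x, hx⟩ => hs ⟨x, TransGen.mono h _ _ hx⟩

theorem acyclicRel.irreflexiveRel_rcomp (hs : acyclicRel s) (hr : r ≤ s)
    (ht : t ≤ ReflTransGen s) : irreflexiveRel (rcomp r t) :=
  fun ⟨x, _, hxy, hyx⟩ => hs ⟨x, TransGen.head' (hr _ _ hxy) (ht _ _ hyx)⟩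

theorem rcomp_le_reflTransGen (hr : r ≤ s) (ht : t ≤ ReflTransGen s) :
    rcomp r t ≤ ReflTransGen s :=
  fun _ _ ⟨_, hxy, hyz⟩ => ReflTransGen.head (hr _ _ hxy) (ht _ _ hyz)

end Relations

variable (X : WellFormedExec E Loc)

theorem co_or_scProp_eq_po_or_com :
    (fun x y => X.co x y ∨ scProp X x y) = fun x y => X.po x y ∨ X.com x y := by
  ext x y
  simp only [scProp, scPpo, scFences, WellFormedExec.com, false_or]
  tauto

theorem scProp_le_po_or_com : scProp X ≤ fun x y => X.po x y ∨ X.com x y :=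
  fun _ _ h => co_or_scProp_eq_po_or_com X ▸ Or.inr h

theorem scHb_le_po_or_com : scHb X ≤ fun x y => X.po x y ∨ X.com x y := by
  rintro x y (hpo | hfence | hrfe)
  · exact Or.inl hpo
  · exact hfence.elim
  · exact Or.inr (Or.inr (Or.inl hrfe.1))

theorem fre_le_po_or_com : X.fre ≤ fun x y => X.po x y ∨ X.com x y :=
  fun _ _ h => Or.inr (Or.inr (Or.inr h.1))

theorem poloc_or_com_le_po_or_com :
    (fun x y => X.poloc x y ∨ X.com x y) ≤ fun x y => X.po x y ∨ X.com x y :=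
  fun _ _ => Or.imp_left And.left

/-- The SC part of Lemma 1: the four axioms under the SC instantiation hold
    iff `acyclic (po ∪ com)`, i.e. the execution is SC in Lamport's sense. -/
theorem sc_model_equiv_lamport (X : WellFormedExec E Loc) :
    (acyclicRel (fun x y => X.poloc x y ∨ X.com x y) ∧
     acyclicRel (scHb X) ∧
     irreflexiveRel (rcomp X.fre (rcomp (scProp X) (Relation.ReflTransGen (scHb X)))) ∧
     acyclicRel (fun x y => X.co x y ∨ scProp X x y))
    ↔ acyclicRel (fun x y => X.po x y ∨ X.com x y) := by
  constructor
  · rintro ⟨-, -, -, hprop⟩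
    rwa [co_or_scProp_eq_po_or_com] at hprop
  · intro h
    refine ⟨h.mono (poloc_or_com_le_po_or_com X), h.mono (scHb_le_po_or_com X), ?_,
      by rwa [co_or_scProp_eq_po_or_com]⟩
    exact h.irreflexiveRel_rcomp (fre_le_po_or_com X) <|
      rcomp_le_reflTransGen (scProp_le_po_or_com X) (ReflTransGen.mono (scHb_le_po_or_com X))

end SC
end

section
/- Characterization of SC PER LOCATION by the five coherence patterns. For every well-formed execution, the axiom acyclic(po-loc ∪ com) holds if and only if none of the following five patterns occurs: (coWW) ∃ a b, po-loc a b ∧ co b a; (coRW1) ∃ a b, po-loc a b ∧ rf b a; (coRW2) ∃ a b c, po-loc a b ∧ co b c ∧ rf c a; (coWR) ∃ a b c, po-loc a b ∧ rf c b ∧ co c a; (coRR) ∃ a b c d, po-loc b c ∧ rf a b ∧ rf d c ∧ co d a. Equivalently, acyclic(po-loc ∪ com) holds if and only if irreflexive(po-loc ; (co ∪ rf ∪ fr ∪ co;rf ∪ fr;rf)). -/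
universe u v

variable {E : Type u} {Loc : Type v}

/-!
Each of the five patterns is a cycle of `poloc ∪ com` of length at most three. Conversely, let a
read carry the write it reads from and any other event carry itself, and order events
lexicographically: first by the `co`-position of the carried write, then the write before its
readers, and readers by program order. This strict order contains `com`, and a `poloc` step
between reads or writes that goes against it closes one of the patterns. Events that are
neither are touched only by `poloc`, which is transitive, so a cycle of `poloc ∪ com` would
collapse to a cycle of the strict order.
-/

open Relation

theorem acyclicRel_or_of_le_on {α : Type*} {p t : α → α → Prop}
    [IsTrans α p] [Std.Irrefl p] [IsTrans α t] [Std.Irrefl t] (S : Set α)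
    (ht : ∀ a b, t a b → a ∈ S ∧ b ∈ S) (hp : ∀ a b, a ∈ S → b ∈ S → p a b → t a b) :
    acyclicRel (fun x y => p x y ∨ t x y) := by
  have lift : ∀ {b c}, b ∈ S → c ∈ S → ReflTransGen p b c → ReflGen t b c := by
    intro b c hb hc hbc
    rw [reflTransGen_eq_reflGen] at hbc
    rcases hbc with _ | hbc
    · exact .refl
    · exact .single (hp _ _ hb hc hbc)
  have trans_reflGen : ∀ {a b c}, t a b → ReflGen t b c → t a c := by
    rintro a b c hab (_ | hbc)
    · exact hab
    · exact _root_.trans hab hbc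
  -- `p ∪ p*;t;p*` is transitive: a `p`-path between two `t`-steps joins points of `S`.
  let M : α → α → Prop := fun x y =>
    p x y ∨ ∃ a b, ReflTransGen p x a ∧ t a b ∧ ReflTransGen p b y
  have : IsTrans α M := ⟨by
    rintro x y z (hxy | ⟨a, b, hxa, hab, hby⟩) (hyz | ⟨c, d, hyc, hcd, hdz⟩)
    · exact .inl (_root_.trans hxy hyz)
    · exact .inr ⟨c, d, .head hxy hyc, hcd, hdz⟩
    · exact .inr ⟨a, b, hxa, hab, hby.tail hyz⟩
    · have hbc := lift (ht _ _ hab).2 (ht _ _ hcd).1 (hby.trans hyc)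
      exact .inr ⟨a, d, hxa, _root_.trans (trans_reflGen hab hbc) hcd, hdz⟩⟩
  rintro ⟨x, hx⟩
  obtain hxx | ⟨a, b, hxa, hab, hbx⟩ :=
    transGen_minimal (r' := M) (fun x y h => h.imp id fun h => ⟨x, y, .refl, h, .refl⟩) x x hx
  · exact irrefl x hxx
  · exact irrefl a (trans_reflGen hab (lift (ht _ _ hab).2 (ht _ _ hab).1 (hbx.trans hxa)))

namespace WellFormedExec

variable (X : WellFormedExec E Loc)

instance : IsTrans E X.co := ⟨X.co_trans⟩

instance : Std.Irrefl X.co := ⟨X.co_irrefl⟩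

instance : IsTrans E X.poloc :=
  ⟨fun _ _ _ hxy hyz => ⟨X.po_trans _ _ _ hxy.1 hyz.1, hxy.2.trans hyz.2⟩⟩

instance : Std.Irrefl X.poloc := ⟨fun x h => X.po_irrefl x h.1⟩

lemma notMem_R_of_mem_W {x : E} (h : x ∈ X.W) : x ∉ X.R :=
  Set.disjoint_left.mp X.WR_disjoint h

open Classical in
noncomputable def writeOf (x : E) : E :=
  if h : x ∈ X.R then (X.rf_exists_unique x h).choose else x

variable {X}

lemma rf_writeOf {x : E} (h : x ∈ X.R) : X.rf (X.writeOf x) x := by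
  rw [writeOf, dif_pos h]
  exact (X.rf_exists_unique x h).choose_spec.1

lemma writeOf_eq_of_rf {w x : E} (h : X.rf w x) : X.writeOf x = w := by
  have hx : x ∈ X.R := (X.rf_wf _ _ h).2.1
  rw [writeOf, dif_pos hx]
  exact ((X.rf_exists_unique x hx).choose_spec.2 w h).symm

lemma writeOf_of_notMem_R {x : E} (h : x ∉ X.R) : X.writeOf x = x := by
  rw [writeOf, dif_neg h]

lemma writeOf_of_mem_W {x : E} (h : x ∈ X.W) : X.writeOf x = x :=
  writeOf_of_notMem_R (X.notMem_R_of_mem_W h)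

lemma writeOf_mem_W_iff {x : E} : X.writeOf x ∈ X.W ↔ x ∈ X.W ∪ X.R := by
  by_cases hR : x ∈ X.R
  · simp [hR, (X.rf_wf _ _ (rf_writeOf hR)).1]
  · simp [hR, writeOf_of_notMem_R hR]

lemma addr_writeOf (x : E) : X.addr (X.writeOf x) = X.addr x := by
  by_cases hR : x ∈ X.R
  · exact (X.rf_wf _ _ (rf_writeOf hR)).2.2
  · rw [writeOf_of_notMem_R hR]

variable (X)

def readerOrder (x y : E) : Prop :=
  (x ∈ X.W ∨ x ∈ X.R ∧ X.poloc x y) ∧ y ∈ X.R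

instance : IsTrans E X.readerOrder := ⟨by
  rintro x y z ⟨hx, hy⟩ ⟨hy' | ⟨-, hyz⟩, hz⟩
  · exact absurd hy (X.notMem_R_of_mem_W hy')
  · exact ⟨hx.imp_right fun hx => ⟨hx.1, _root_.trans hx.2 hyz⟩, hz⟩⟩

instance : Std.Irrefl X.readerOrder := ⟨by
  rintro x ⟨hx | ⟨-, hx⟩, hR⟩
  · exact X.notMem_R_of_mem_W hx hR
  · exact irrefl x hx⟩

def coherenceOrder : E → E → Prop :=
  InvImage (Prod.Lex X.co X.readerOrder) fun x => (X.writeOf x, x)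

instance : IsTrans E X.coherenceOrder := InvImage.isTrans _ _

instance : Std.Irrefl X.coherenceOrder := InvImage.irrefl _ _

def coherenceCom (x y : E) : Prop :=
  X.co x y ∨ X.rf x y ∨ X.fr x y ∨ rcomp X.co X.rf x y ∨ rcomp X.fr X.rf x y

variable {X}

lemma coherenceOrder_iff {x y : E} :
    X.coherenceOrder x y ↔
      X.co (X.writeOf x) (X.writeOf y) ∨ X.writeOf x = X.writeOf y ∧ X.readerOrder x y :=
  Prod.lex_iff

lemma mem_of_coherenceOrder {x y : E} (h : X.coherenceOrder x y) :
    x ∈ X.W ∪ X.R ∧ y ∈ X.W ∪ X.R := by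
  rcases coherenceOrder_iff.1 h with hco | ⟨-, hx, hy⟩
  · have := X.co_wf _ _ hco
    exact ⟨writeOf_mem_W_iff.1 this.1, writeOf_mem_W_iff.1 this.2.1⟩
  · exact ⟨hx.imp_right And.left, .inr hy⟩

lemma coherenceOrder_of_com {x y : E} (h : X.com x y) : X.coherenceOrder x y := by
  refine coherenceOrder_iff.2 ?_
  rcases h with hco | hrf | ⟨w, hrf, hco⟩
  · have := X.co_wf _ _ hco
    rw [writeOf_of_mem_W this.1, writeOf_of_mem_W this.2.1]
    exact .inl hco
  · have := X.rf_wf _ _ hrf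
    rw [writeOf_of_mem_W this.1, writeOf_eq_of_rf hrf]
    exact .inr ⟨rfl, .inl this.1, this.2.1⟩
  · rw [writeOf_eq_of_rf hrf, writeOf_of_mem_W (X.co_wf _ _ hco).2.1]
    exact .inl hco

lemma coherenceCom_of_co_writeOf {x y : E} (h : X.co (X.writeOf x) (X.writeOf y)) :
    X.coherenceCom x y := by
  by_cases hxR : x ∈ X.R <;> by_cases hyR : y ∈ X.R
  · exact .inr <| .inr <| .inr <| .inr ⟨X.writeOf y, ⟨_, rf_writeOf hxR, h⟩, rf_writeOf hyR⟩
  · rw [writeOf_of_notMem_R hyR] at h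
    exact .inr <| .inr <| .inl ⟨_, rf_writeOf hxR, h⟩
  · rw [writeOf_of_notMem_R hxR] at h
    exact .inr <| .inr <| .inr <| .inl ⟨_, h, rf_writeOf hyR⟩
  · rw [writeOf_of_notMem_R hxR, writeOf_of_notMem_R hyR] at h
    exact .inl h

lemma coherenceOrder_or_coherenceCom_of_poloc {x y : E} (hx : x ∈ X.W ∪ X.R)
    (hy : y ∈ X.W ∪ X.R) (h : X.poloc x y) : X.coherenceOrder x y ∨ X.coherenceCom y x := by
  by_cases heq : X.writeOf x = X.writeOf y
  · by_cases hyR : y ∈ X.R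
    · exact .inl <| coherenceOrder_iff.2 <| .inr ⟨heq, hx.imp_right (⟨·, h⟩), hyR⟩
    rw [writeOf_of_notMem_R hyR] at heq
    by_cases hxR : x ∈ X.R
    · exact .inr <| .inr <| .inl (heq ▸ rf_writeOf hxR)
    · rw [writeOf_of_notMem_R hxR] at heq
      exact absurd (heq ▸ h) (irrefl y)
  have haddr : X.addr (X.writeOf x) = X.addr (X.writeOf y) := by
    rw [addr_writeOf, addr_writeOf, h.2]
  rcases X.co_total _ _ (writeOf_mem_W_iff.2 hx) (writeOf_mem_W_iff.2 hy) heq haddr with hco | hco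
  · exact .inl (coherenceOrder_iff.2 (.inl hco))
  · exact .inr (coherenceCom_of_co_writeOf hco)

lemma transGen_com_of_coherenceCom {x y : E} (h : X.coherenceCom x y) :
    TransGen X.com x y := by
  rcases h with hco | hrf | hfr | ⟨z, hco, hrf⟩ | ⟨z, hfr, hrf⟩
  · exact .single (.inl hco)
  · exact .single (.inr (.inl hrf))
  · exact .single (.inr (.inr hfr))
  · exact .head (.inl hco) (.single (.inr (.inl hrf)))
  · exact .head (.inr (.inr hfr)) (.single (.inr (.inl hrf)))

theorem acyclicRel_iff_irreflexiveRel :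
    acyclicRel (fun x y => X.poloc x y ∨ X.com x y) ↔
      irreflexiveRel (rcomp X.poloc X.coherenceCom) := by
  constructor
  · rintro hac ⟨x, y, hxy, hyx⟩
    have hcom : TransGen (fun x y => X.poloc x y ∨ X.com x y) y x :=
      TransGen.mono (fun _ _ => .inr) _ _ (transGen_com_of_coherenceCom hyx)
    exact hac ⟨x, .head (.inl hxy) hcom⟩
  · rintro hirr ⟨x, hx⟩
    have hpoloc : ∀ a b, a ∈ X.W ∪ X.R → b ∈ X.W ∪ X.R → X.poloc a b → X.coherenceOrder a b :=
      fun a b ha hb hab => (coherenceOrder_or_coherenceCom_of_poloc ha hb hab).resolve_right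
        fun hba => hirr ⟨a, b, hab, hba⟩
    exact acyclicRel_or_of_le_on (t := X.coherenceOrder) _ (fun _ _ => mem_of_coherenceOrder) hpoloc
      ⟨x, TransGen.mono (fun _ _ => .imp_right coherenceOrder_of_com) _ _ hx⟩

theorem irreflexiveRel_rcomp_poloc_coherenceCom_iff :
    irreflexiveRel (rcomp X.poloc X.coherenceCom) ↔
      (¬ (∃ a b, X.poloc a b ∧ X.co b a) ∧
       ¬ (∃ a b, X.poloc a b ∧ X.rf b a) ∧
       ¬ (∃ a b c, X.poloc a b ∧ X.co b c ∧ X.rf c a) ∧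
       ¬ (∃ a b c, X.poloc a b ∧ X.rf c b ∧ X.co c a) ∧
       ¬ (∃ a b c d, X.poloc b c ∧ X.rf a b ∧ X.rf d c ∧ X.co d a)) := by
  simp only [irreflexiveRel, rcomp, coherenceCom, fr]
  grind

end WellFormedExec

/-- Characterization of SC PER LOCATION by the five coherence patterns. -/
theorem sc_per_location_characterization (X : WellFormedExec E Loc) :
    (acyclicRel (fun x y => X.poloc x y ∨ X.com x y)
      ↔ (¬ (∃ a b, X.poloc a b ∧ X.co b a) ∧
         ¬ (∃ a b, X.poloc a b ∧ X.rf b a) ∧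
         ¬ (∃ a b c, X.poloc a b ∧ X.co b c ∧ X.rf c a) ∧
         ¬ (∃ a b c, X.poloc a b ∧ X.rf c b ∧ X.co c a) ∧
         ¬ (∃ a b c d, X.poloc b c ∧ X.rf a b ∧ X.rf d c ∧ X.co d a))) ∧
    (acyclicRel (fun x y => X.poloc x y ∨ X.com x y)
      ↔ irreflexiveRel (rcomp X.poloc (fun x y =>
          X.co x y ∨ X.rf x y ∨ X.fr x y ∨
          rcomp X.co X.rf x y ∨ rcomp X.fr X.rf x y))) := by
  have h := X.acyclicRel_iff_irreflexiveRel
  exact ⟨h.trans X.irreflexiveRel_rcomp_poloc_coherenceCom_iff, h⟩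
end
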